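/- The function b₀(x) = −(1/(2·ζ(x)^{1/2}))·( x(x²−6)/(12(x²−1)^{3/2}) + 5/(24·ζ(x)^{3/2}) ) tends to −(9/140)·2^{−2/3} as x → 1 from the right, where ζ(x) = ( (3/4)·( x·√(x²−1) − arcosh x ) )^{2/3}. -/

import Mathlib

/-!
Write `g = ζ^{3/2} = (3/4)(x√(x²-1) - arcosh x)` and `w = √(x²-1)`, so that `g' = (3/2) w`, and
put `r = g / w³`. Then `b₀ = -(5 + 2x(x²-6) r) / (48 w⁴ r^{4/3})` with `w⁴ = (x-1)²(x+1)²`, so it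
suffices to know `r` to second order at `x = 1`.

The polynomial `φ(x) = 1/2 - (3/10)(x-1) + (6/35)(x-1)²` solves `3xφ + (x²-1)φ' = 3/2` up to the
error `(6/7)(x-1)³`; hence `(g - w³(φ - c(x-1)³))' = w (x-1)³ (3c(2x+1) - 6/7)`, which is `≤ 0` for
`c = 0` and `≥ 0` for `c = 2/21`. Both functions vanish at `1`, so `φ - (2/21)(x-1)³ ≤ r ≤ φ` for
`x ≥ 1`. Consequently `r → 1/2` and `5 + 2x(x²-6) r = (108/35)(x-1)² + O((x-1)³)`, and `b₀` tends
to `-(108/35) / (48 · 4 · 2^{-4/3}) = -(9/140) · 2^{-2/3}`.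
-/

open Real Filter

/-- The inverse hyperbolic cosine, `arcosh x = log (x + √(x² - 1))`. -/
noncomputable def arcosh (x : ℝ) : ℝ := Real.log (x + Real.sqrt (x ^ 2 - 1))

/-- The variable `ζ(x) = ((3/4)(x√(x²-1) - arcosh x))^{2/3}` for `x ≥ 1`. -/
noncomputable def zeta (x : ℝ) : ℝ :=
  ((3 / 4) * (x * Real.sqrt (x ^ 2 - 1) - _root_.arcosh x)) ^ ((2 : ℝ) / 3)

/-- The coefficient function
`b₀(x) = -(1/(2ζ^{1/2}))·(x(x²-6)/(12(x²-1)^{3/2}) + 5/(24ζ^{3/2}))`. -/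
noncomputable def b0 (x : ℝ) : ℝ :=
  -(1 / (2 * zeta x ^ ((1 : ℝ) / 2))) *
    (x * (x ^ 2 - 6) / (12 * (x ^ 2 - 1) ^ ((3 : ℝ) / 2)) +
      5 / (24 * zeta x ^ ((3 : ℝ) / 2)))

open Set Topology

noncomputable def zetaThreeHalves (x : ℝ) : ℝ :=
  3 / 4 * (x * √(x ^ 2 - 1) - _root_.arcosh x)

noncomputable def zetaRatio (x : ℝ) : ℝ :=
  zetaThreeHalves x / √(x ^ 2 - 1) ^ 3

noncomputable def zetaRatioApprox (c x : ℝ) : ℝ :=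
  1 / 2 - 3 / 10 * (x - 1) + 6 / 35 * (x - 1) ^ 2 - c * (x - 1) ^ 3

lemma hasDerivAt_sqrt_sq_sub_one {x : ℝ} (hx : 1 < x) :
    HasDerivAt (fun y => √(y ^ 2 - 1)) (x / √(x ^ 2 - 1)) x := by
  have hpos : 0 < x ^ 2 - 1 := by nlinarith
  convert ((hasDerivAt_pow 2 x).sub_const 1).sqrt hpos.ne' using 1
  field_simp
  ring

lemma hasDerivAt_zetaThreeHalves {x : ℝ} (hx : 1 < x) :
    HasDerivAt zetaThreeHalves (3 / 2 * √(x ^ 2 - 1)) x := by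
  have hw : 0 < √(x ^ 2 - 1) := Real.sqrt_pos.mpr (by nlinarith)
  have hw2 : √(x ^ 2 - 1) ^ 2 = x ^ 2 - 1 := Real.sq_sqrt (by nlinarith)
  refine ((((hasDerivAt_id x).mul (hasDerivAt_sqrt_sq_sub_one hx)).sub
    (Real.hasDerivAt_arcosh hx)).const_mul (3 / 4)).congr_deriv ?_
  simp only [id]
  field_simp
  linear_combination (-2) * hw2

lemma continuousOn_zetaThreeHalves : ContinuousOn zetaThreeHalves (Ici 1) :=
  continuousOn_const.mul ((by fun_prop : Continuous fun x : ℝ => x * √(x ^ 2 - 1)).continuousOn.sub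
    Real.continuousOn_arcosh)

lemma hasDerivAt_zetaThreeHalves_sub_approx (c : ℝ) {x : ℝ} (hx : 1 < x) :
    HasDerivAt (fun y => zetaThreeHalves y - √(y ^ 2 - 1) ^ 3 * zetaRatioApprox c y)
      (√(x ^ 2 - 1) * (x - 1) ^ 3 * (3 * c * (2 * x + 1) - 6 / 7)) x := by
  have hw : 0 < √(x ^ 2 - 1) := Real.sqrt_pos.mpr (by nlinarith)
  have hw2 : √(x ^ 2 - 1) ^ 2 = x ^ 2 - 1 := Real.sq_sqrt (by nlinarith)
  have happrox : HasDerivAt (zetaRatioApprox c)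
      (-3 / 10 + 12 / 35 * (x - 1) - 3 * c * (x - 1) ^ 2) x := by
    refine (((((hasDerivAt_id x).sub_const 1).const_mul (3 / 10)).const_sub (1 / 2)).add
      ((((hasDerivAt_id x).sub_const 1).pow 2).const_mul (6 / 35))).sub
      ((((hasDerivAt_id x).sub_const 1).pow 3).const_mul c) |>.congr_deriv ?_
    simp only [id]
    ring
  refine ((hasDerivAt_zetaThreeHalves hx).sub
    (((hasDerivAt_sqrt_sq_sub_one hx).pow 3).mul happrox)).congr_deriv ?_
  norm_num [zetaRatioApprox]
  field_simp
  rw [hw2]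
  ring

lemma continuousOn_zetaThreeHalves_sub_approx (c : ℝ) :
    ContinuousOn (fun y => zetaThreeHalves y - √(y ^ 2 - 1) ^ 3 * zetaRatioApprox c y) (Ici 1) :=
  continuousOn_zetaThreeHalves.sub (by unfold zetaRatioApprox; fun_prop)

lemma zetaThreeHalves_sub_approx_one (c : ℝ) :
    zetaThreeHalves 1 - √((1 : ℝ) ^ 2 - 1) ^ 3 * zetaRatioApprox c 1 = 0 := by
  simp [zetaThreeHalves, _root_.arcosh]

lemma zetaThreeHalves_le {x : ℝ} (hx : 1 ≤ x) :
    zetaThreeHalves x ≤ √(x ^ 2 - 1) ^ 3 * zetaRatioApprox 0 x := by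
  have hanti := antitoneOn_of_hasDerivWithinAt_nonpos (convex_Ici 1)
    (continuousOn_zetaThreeHalves_sub_approx 0)
    (fun y hy => (hasDerivAt_zetaThreeHalves_sub_approx 0
      (by simpa using hy)).hasDerivWithinAt)
    (fun y hy => by
      rw [interior_Ici] at hy
      have : 0 ≤ √(y ^ 2 - 1) * (y - 1) ^ 3 := by
        have : 0 < y - 1 := sub_pos.2 hy
        positivity
      nlinarith)
  have := hanti self_mem_Ici hx hx
  simp only [zetaThreeHalves_sub_approx_one] at this
  linarith

lemma approx_le_zetaThreeHalves {x : ℝ} (hx : 1 ≤ x) :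
    √(x ^ 2 - 1) ^ 3 * zetaRatioApprox (2 / 21) x ≤ zetaThreeHalves x := by
  have hmono := monotoneOn_of_hasDerivWithinAt_nonneg (convex_Ici 1)
    (continuousOn_zetaThreeHalves_sub_approx (2 / 21))
    (fun y hy => (hasDerivAt_zetaThreeHalves_sub_approx (2 / 21)
      (by simpa using hy)).hasDerivWithinAt)
    (fun y hy => by
      rw [interior_Ici] at hy
      have : 0 < y - 1 := sub_pos.2 hy
      have : 0 ≤ √(y ^ 2 - 1) * (y - 1) ^ 3 * (y - 1) := by positivity
      nlinarith)
  have := hmono self_mem_Ici hx hx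
  simp only [zetaThreeHalves_sub_approx_one] at this
  linarith

lemma zetaRatio_mem_Icc {x : ℝ} (hx : 1 < x) :
    zetaRatio x ∈ Icc (zetaRatioApprox (2 / 21) x) (zetaRatioApprox 0 x) := by
  have hw : 0 < √(x ^ 2 - 1) ^ 3 := pow_pos (Real.sqrt_pos.mpr (by nlinarith)) 3
  constructor
  · rw [zetaRatio, le_div_iff₀ hw, mul_comm]
    exact approx_le_zetaThreeHalves hx.le
  · rw [zetaRatio, div_le_iff₀ hw, mul_comm]
    exact zetaThreeHalves_le hx.le

lemma tendsto_zetaRatioApprox (c : ℝ) :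
    Tendsto (zetaRatioApprox c) (𝓝[>] 1) (𝓝 (1 / 2)) := by
  have : Continuous (zetaRatioApprox c) := by unfold zetaRatioApprox; fun_prop
  simpa [zetaRatioApprox] using this.continuousWithinAt.tendsto (x := 1) (s := Ioi 1)

lemma tendsto_zetaRatio : Tendsto zetaRatio (𝓝[>] 1) (𝓝 (1 / 2)) :=
  tendsto_of_tendsto_of_tendsto_of_le_of_le' (tendsto_zetaRatioApprox (2 / 21))
    (tendsto_zetaRatioApprox 0)
    (eventually_nhdsWithin_of_forall fun _ hx => (zetaRatio_mem_Icc hx).1)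
    (eventually_nhdsWithin_of_forall fun _ hx => (zetaRatio_mem_Icc hx).2)

lemma tendsto_zetaRatio_sub_approx_div :
    Tendsto (fun x => (zetaRatio x - zetaRatioApprox 0 x) / (x - 1) ^ 2) (𝓝[>] 1) (𝓝 0) := by
  have hlin : Tendsto (fun x : ℝ => -(2 / 21) * (x - 1)) (𝓝[>] 1) (𝓝 0) := by
    have : Continuous (fun x : ℝ => -(2 / 21) * (x - 1)) := by fun_prop
    simpa using this.continuousWithinAt.tendsto (x := 1) (s := Ioi 1)
  refine tendsto_of_tendsto_of_tendsto_of_le_of_le' hlin tendsto_const_nhds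
    (eventually_nhdsWithin_of_forall fun x hx => ?_)
    (eventually_nhdsWithin_of_forall fun x hx => ?_)
  · have ht : 0 < (x - 1) ^ 2 := pow_pos (sub_pos.2 hx) 2
    rw [le_div_iff₀ ht]
    have := (zetaRatio_mem_Icc hx).1
    simp only [zetaRatioApprox] at this ⊢
    nlinarith
  · have ht : 0 < (x - 1) ^ 2 := pow_pos (sub_pos.2 hx) 2
    rw [div_le_iff₀ ht, zero_mul, sub_nonpos]
    exact (zetaRatio_mem_Icc hx).2

lemma tendsto_five_add_mul_zetaRatio_div :
    Tendsto (fun x => (5 + 2 * (x * (x ^ 2 - 6)) * zetaRatio x) / (x - 1) ^ 2) (𝓝[>] 1)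
      (𝓝 (108 / 35)) := by
  have hpoly : Continuous (fun x : ℝ => 108 / 35 - 64 / 35 * (x - 1) + 3 / 7 * (x - 1) ^ 2
      + 12 / 35 * (x - 1) ^ 3) := by fun_prop
  have hcubic : Continuous (fun x : ℝ => 2 * (x * (x ^ 2 - 6))) := by fun_prop
  have := (hpoly.continuousWithinAt.tendsto (x := 1) (s := Ioi 1)).add
    ((hcubic.continuousWithinAt.tendsto (x := 1) (s := Ioi 1)).mul
      tendsto_zetaRatio_sub_approx_div)
  norm_num at this
  refine this.congr' (eventually_nhdsWithin_of_forall fun x hx => ?_)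
  have ht : x - 1 ≠ 0 := sub_ne_zero.2 hx.ne'
  simp only [zetaRatioApprox]
  field_simp
  ring

lemma zeta_eq_rpow (x : ℝ) : zeta x = zetaThreeHalves x ^ ((2 : ℝ) / 3) := rfl

lemma pow_three_rpow_one_third {a : ℝ} (ha : 0 ≤ a) : (a ^ 3) ^ ((1 : ℝ) / 3) = a := by
  rw [← Real.rpow_natCast, ← Real.rpow_mul ha]
  norm_num

lemma sq_sub_one_rpow_three_halves {x : ℝ} (hx : 1 ≤ x) :
    (x ^ 2 - 1) ^ ((3 : ℝ) / 2) = √(x ^ 2 - 1) ^ 3 := by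
  conv_lhs => rw [← Real.sq_sqrt (by nlinarith : 0 ≤ x ^ 2 - 1)]
  rw [← Real.rpow_natCast, ← Real.rpow_mul (Real.sqrt_nonneg _)]
  norm_num

lemma b0_eq {x : ℝ} (hx : 1 < x) (hr : 0 < zetaRatio x) :
    b0 x = -((5 + 2 * (x * (x ^ 2 - 6)) * zetaRatio x) / (x - 1) ^ 2) /
      (48 * (x + 1) ^ 2 * zetaRatio x * zetaRatio x ^ ((1 : ℝ) / 3)) := by
  have hw : 0 < √(x ^ 2 - 1) := Real.sqrt_pos.mpr (by nlinarith)
  have hw2 : √(x ^ 2 - 1) ^ 2 = x ^ 2 - 1 := Real.sq_sqrt (by nlinarith)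
  have hg : zetaThreeHalves x = √(x ^ 2 - 1) ^ 3 * zetaRatio x := by
    rw [zetaRatio]
    field_simp
  have hg0 : 0 ≤ zetaThreeHalves x := hg ▸ by positivity
  have hz12 : zeta x ^ ((1 : ℝ) / 2) = √(x ^ 2 - 1) * zetaRatio x ^ ((1 : ℝ) / 3) := by
    rw [zeta_eq_rpow, ← Real.rpow_mul hg0, show (2 : ℝ) / 3 * (1 / 2) = 1 / 3 by norm_num, hg,
      Real.mul_rpow (by positivity) hr.le, pow_three_rpow_one_third hw.le]
  have hz32 : zeta x ^ ((3 : ℝ) / 2) = √(x ^ 2 - 1) ^ 3 * zetaRatio x := by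
    rw [zeta_eq_rpow, ← hg, ← Real.rpow_mul hg0]
    norm_num
  have hs : 0 < zetaRatio x ^ ((1 : ℝ) / 3) := by positivity
  have h1 : x - 1 ≠ 0 := sub_ne_zero.2 hx.ne'
  rw [b0, hz12, hz32, sq_sub_one_rpow_three_halves hx.le]
  field_simp
  rw [show √(x ^ 2 - 1) ^ 4 = (√(x ^ 2 - 1) ^ 2) ^ 2 by ring, hw2]
  ring

theorem tendsto_b0_one :
    Tendsto b0 (nhdsWithin 1 (Set.Ioi 1))
      (nhds (-(9 / 140) * (2 : ℝ) ^ (-(2 : ℝ) / 3))) := by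
  have hx : Tendsto (fun x : ℝ => x) (𝓝[>] 1) (𝓝 1) := tendsto_nhdsWithin_of_tendsto_nhds tendsto_id
  have hden : Tendsto (fun x => 48 * (x + 1) ^ 2 * zetaRatio x * zetaRatio x ^ ((1 : ℝ) / 3))
      (𝓝[>] 1) (𝓝 (48 * (1 + 1) ^ 2 * (1 / 2) * (1 / 2 : ℝ) ^ ((1 : ℝ) / 3))) :=
    ((((hx.add_const 1).pow 2).const_mul 48).mul tendsto_zetaRatio).mul
      (tendsto_zetaRatio.rpow_const (Or.inr (by norm_num)))
  have hratio_pos : ∀ᶠ x in 𝓝[>] 1, 0 < zetaRatio x :=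
    tendsto_zetaRatio.eventually (lt_mem_nhds (by norm_num))
  have hlimit : -(108 / 35) / (48 * (1 + 1) ^ 2 * (1 / 2) * (1 / 2 : ℝ) ^ ((1 : ℝ) / 3)) =
      -(9 / 140) * (2 : ℝ) ^ (-(2 : ℝ) / 3) := by
    have h : (1 / 2 : ℝ) ^ ((1 : ℝ) / 3) * (2 : ℝ) ^ (-((2 : ℝ) / 3)) = 1 / 2 := by
      rw [one_div, Real.inv_rpow zero_le_two, ← Real.rpow_neg zero_le_two,
        ← Real.rpow_add zero_lt_two]
      norm_num
    have hpos : 0 < (1 / 2 : ℝ) ^ ((1 : ℝ) / 3) := by positivity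
    field_simp
    linear_combination 60480 * h
  rw [← hlimit]
  refine (tendsto_five_add_mul_zetaRatio_div.neg.div hden (by positivity)).congr' ?_
  filter_upwards [self_mem_nhdsWithin, hratio_pos] with x hx1 hr
  exact (b0_eq hx1 hr).symm
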